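/- arXiv:quant-ph/0601155 — 3 statements merged into one kernel-verified Lean document; each statement's English description precedes it below -/
import Mathlib

section
/- For any A : ℕ×ℕ → 𝔻, n ∈ ℕ and l ≥ 1, the noise number s_n^A(l) = lim_{m→∞} M^(l)(X_m^1) − M^(l)(X_n^A) equals (π/√3)^l (1 − (3/π²) Σ_{k≠n} |A(n,k)|^l/(k−n)²) and is nonnegative. -/
/-! Off the diagonal, `X_n^A` takes the value `(π/√3)|A(n,k)|` with probability `3/(π²(k-n)²)`,
and its diagonal value is `0`, so for `l ≥ 1` the moment `M^(l)(X_n^A)` is `(π/√3)^l · (3/π²)`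
times `∑_{k≠n} |A(n,k)|^l/(k-n)²`. Since `|A(n,k)| ≤ 1` and `k ↦ k - n` is injective from `ℕ`
to `ℤ`, that sum is at most `∑_{m ∈ ℤ} 1/m² = 2ζ(2) = π²/3`, which gives nonnegativity.
Sums over `k ≠ n` are written without the side condition: in Lean the term `1/0` is `0`. -/

open Real

/-- The `l`-th moment of the random variable `X_n^A` associated with a matrix
`A : ℕ×ℕ → 𝔻`, with respect to the probability weights `p_n` on `ℕ`. -/
noncomputable def Ml (A : ℕ → ℕ → ℂ) (n l : ℕ) : ℝ :=
  ∑' k : ℕ,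
    (if k = n then (0:ℝ) else (π / Real.sqrt 3) * ‖A n k‖) ^ l *
      (if k = n then 1 - ∑' m : ℕ, (if m = n then (0:ℝ) else 3 / (π ^ 2 * ((m : ℝ) - n) ^ 2))
       else 3 / (π ^ 2 * ((k : ℝ) - n) ^ 2))

theorem hasSum_int_one_div_sq : HasSum (fun m : ℤ => 1 / (m : ℝ) ^ 2) (π ^ 2 / 3) := by
  have hpos : HasSum (fun k : ℕ => 1 / ((k + 1 : ℕ) : ℝ) ^ 2) (π ^ 2 / 6) := by
    simpa using (hasSum_nat_add_iff' 1).2 hasSum_zeta_two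
  have hneg : HasSum (fun k : ℕ => 1 / ((-(k + 1) : ℤ) : ℝ) ^ 2) (π ^ 2 / 6) :=
    hpos.congr_fun fun k => by push_cast; ring
  have h := HasSum.of_nat_of_neg_add_one (f := fun m : ℤ => 1 / (m : ℝ) ^ 2)
    (by simpa using hasSum_zeta_two) hneg
  rwa [← add_halves (π ^ 2 / 3), div_div, show (3 : ℝ) * 2 = 6 by norm_num]

theorem summable_one_div_sq_sub (n : ℤ) :
    Summable fun k : ℕ => 1 / ((k : ℝ) - n) ^ 2 := by
  simpa [Function.comp_def] using hasSum_int_one_div_sq.summable.comp_injective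
    (sub_left_injective.comp Nat.cast_injective : Function.Injective fun k : ℕ => (k : ℤ) - n)

theorem tsum_one_div_sq_sub_le (n : ℤ) :
    ∑' k : ℕ, 1 / ((k : ℝ) - n) ^ 2 ≤ π ^ 2 / 3 := by
  have := tsum_comp_le_tsum_of_inj hasSum_int_one_div_sq.summable (fun m => by positivity)
    (sub_left_injective.comp Nat.cast_injective : Function.Injective fun k : ℕ => (k : ℤ) - n)
  rw [hasSum_int_one_div_sq.tsum_eq] at this
  simpa [Function.comp_def] using this

theorem tsum_div_sq_sub_le {w : ℕ → ℝ} (hw₀ : ∀ k, 0 ≤ w k) (hw₁ : ∀ k, w k ≤ 1) (n : ℤ) :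
    ∑' k : ℕ, w k / ((k : ℝ) - n) ^ 2 ≤ π ^ 2 / 3 := by
  have hle : ∀ k : ℕ, w k / ((k : ℝ) - n) ^ 2 ≤ 1 / ((k : ℝ) - n) ^ 2 := fun k =>
    div_le_div_of_nonneg_right (hw₁ k) (sq_nonneg _)
  calc ∑' k : ℕ, w k / ((k : ℝ) - n) ^ 2
      ≤ ∑' k : ℕ, 1 / ((k : ℝ) - n) ^ 2 :=
        Summable.tsum_le_tsum hle
          ((summable_one_div_sq_sub n).of_nonneg_of_le (fun k => div_nonneg (hw₀ k) (sq_nonneg _)) hle)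
          (summable_one_div_sq_sub n)
    _ ≤ π ^ 2 / 3 := tsum_one_div_sq_sub_le n

theorem Ml_eq_mul_tsum (A : ℕ → ℕ → ℂ) (n : ℕ) {l : ℕ} (hl : l ≠ 0) :
    Ml A n l = (π / √3) ^ l * (3 / π ^ 2 * ∑' k : ℕ, ‖A n k‖ ^ l / ((k : ℝ) - n) ^ 2) := by
  rw [Ml, ← tsum_mul_left, ← tsum_mul_left]
  refine tsum_congr fun k => ?_
  split_ifs with hk
  · simp [hk, zero_pow hl]
  · have hkn : (k : ℝ) - n ≠ 0 := sub_ne_zero.2 (by exact_mod_cast hk)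
    field_simp
    ring

/-- For any `A : ℕ×ℕ → 𝔻`, `n ∈ ℕ` and `l ≥ 1`, the noise number
`s_n^A(l) = lim_m M^(l)(X_m^1) - M^(l)(X_n^A) = (π/√3)^l - M^(l)(X_n^A)` equals
`(π/√3)^l (1 - (3/π²) ∑_{k ≠ n} |A(n,k)|^l/(k-n)²)` and is nonnegative. -/
theorem stmt3 (A : ℕ → ℕ → ℂ) (hA : ∀ n m, ‖A n m‖ ≤ 1)
    (n l : ℕ) (hl : 1 ≤ l) :
    (π / Real.sqrt 3) ^ l - Ml A n l =
      (π / Real.sqrt 3) ^ l *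
        (1 - 3 / π ^ 2 *
          ∑' k : ℕ, (if k = n then (0:ℝ)
            else ‖A n k‖ ^ l / ((k : ℝ) - n) ^ 2)) ∧
    0 ≤ (π / Real.sqrt 3) ^ l - Ml A n l := by
  have hdiag : ∀ k : ℕ, (if k = n then (0:ℝ) else ‖A n k‖ ^ l / ((k : ℝ) - n) ^ 2) =
      ‖A n k‖ ^ l / ((k : ℝ) - n) ^ 2 := fun k => by
    split_ifs with hk <;> simp [hk]
  have hsum : ∑' k : ℕ, ‖A n k‖ ^ l / ((k : ℝ) - n) ^ 2 ≤ π ^ 2 / 3 := by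
    simpa using tsum_div_sq_sub_le (fun k => by positivity)
      (fun k => pow_le_one₀ (norm_nonneg _) (hA n k)) n
  have hweight : 3 / π ^ 2 * ∑' k : ℕ, ‖A n k‖ ^ l / ((k : ℝ) - n) ^ 2 ≤ 1 := by
    rw [div_mul_eq_mul_div, div_le_one (by positivity)]
    linarith
  simp only [hdiag, Ml_eq_mul_tsum A n (by omega : l ≠ 0)]
  exact ⟨by ring, by rw [← mul_one_sub]; exact mul_nonneg (by positivity) (by linarith)⟩
end

section
/- A function A : ℕ×ℕ → ℂ that is positive semidefinite, normalized (A(n,n) = 1 for all n) and takes values in the unit circle 𝕋 is necessarily of the form A(n,m) = e^{i(ν_n − ν_m)} for some real sequence (ν_n). -/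
/-!
Positive semidefiniteness makes `A` a Gram matrix of unit vectors, and `|A(m,l)| = 1` is the
equality case of Cauchy–Schwarz. Concretely, the vector `e_m - A(l,m) e_l` has quadratic form
`1 + 1 - 2|A(m,l)|² = 0`, so it lies in the kernel of every finite principal submatrix containing
it; reading off the row of any `k` gives `A(k,m) = A(k,l) A(l,m)`. Taking `l = 0` factors
`A(n,m) = A(n,0) · conj A(m,0)`, and `ν n = arg A(n,0)` works.
-/

open Complex Matrix
open scoped ComplexOrder

namespace Matrix

lemma finsupp_sum_single_add_single {n 𝕜 : Type*} [DecidableEq n] [CommRing 𝕜] [StarRing 𝕜]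
    (M : Matrix n n 𝕜) (i j : n) (a b : 𝕜) :
    ((Finsupp.single i a + Finsupp.single j b).sum fun k xk ↦
      (Finsupp.single i a + Finsupp.single j b).sum fun l xl ↦ star xk * M k l * xl) =
      star a * M i i * a + star a * M i j * b + star b * M j i * a + star b * M j j * b := by
  simp only [mul_zero, implies_true, mul_add, Finsupp.sum_add_index', Finsupp.sum_single_index,
    Finsupp.sum_add, star_zero, zero_mul, star_add, add_mul]
  ring

lemma posSemidef_of_forall_finsupp_nonneg {n : Type*} {M : Matrix n n ℂ}
    (hM : ∀ x : n →₀ ℂ, 0 ≤ x.sum fun i xi ↦ x.sum fun j xj ↦ star xi * M i j * xj) :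
    M.PosSemidef := by
  classical
  refine ⟨?_, hM⟩
  have him (i j : n) (a b : ℂ) :
      (star a * M i i * a + star a * M i j * b + star b * M j i * a + star b * M j j * b).im = 0 := by
    rw [← finsupp_sum_single_add_single]
    exact (Complex.nonneg_iff.mp (hM _)).2.symm
  ext i j
  have hii := him i i 1 0
  have hjj := him j j 1 0
  have h₁ := him j i 1 1
  have h₂ := him j i 1 I
  simp only [star_one, one_mul, mul_one, mul_zero, add_zero, star_zero, zero_mul, add_im,
    RCLike.star_def, conj_I, neg_mul, mul_im, I_im, I_re, neg_im, zero_add, mul_re, zero_sub,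
    neg_neg] at hii hjj h₁ h₂
  apply Complex.ext <;> simp only [conjTranspose_apply, RCLike.star_def, conj_re, conj_im] <;>
    linarith

lemma PosSemidef.apply_eq_mul_of_norm_eq_one {n 𝕜 : Type*} [RCLike 𝕜] {M : Matrix n n 𝕜}
    (hM : M.PosSemidef) {m l : n} (hm : M m m = 1) (hl : M l l = 1) (hml : ‖M m l‖ = 1) (k : n) :
    M k m = M k l * M l m := by
  have hunit : M l m * M m l = 1 := by
    rw [← hM.isHermitian.apply l m, RCLike.star_def, RCLike.conj_mul, hml]; simp
  let x : Fin 3 → 𝕜 := ![0, 1, -M l m]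
  have hzero : star x ⬝ᵥ M.submatrix ![k, m, l] ![k, m, l] *ᵥ x = 0 := by
    simp only [x, dotProduct, mulVec, Fin.sum_univ_three, submatrix_apply, Pi.star_apply,
      cons_val_zero, cons_val_one, cons_val_two, tail_cons, head_cons, star_zero, star_one, hm, hl]
    linear_combination -hunit
  have hrow := congrFun (((hM.submatrix ![k, m, l]).dotProduct_mulVec_zero_iff x).mp hzero) 0
  simp only [x, mulVec, dotProduct, Fin.sum_univ_three, submatrix_apply, cons_val_zero,
    cons_val_one, cons_val_two, tail_cons, head_cons, Pi.zero_apply] at hrow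
  linear_combination hrow

end Matrix

lemma Complex.exp_arg_mul_I_of_norm_eq_one {z : ℂ} (hz : ‖z‖ = 1) : exp (arg z * I) = z := by
  simpa [hz] using norm_mul_exp_arg_mul_I z

/-- A normalized positive semidefinite matrix `A : ℕ×ℕ → ℂ` taking values in the unit
circle `𝕋` is necessarily of the form `A(n,m) = e^{i(ν_n - ν_m)}` for some real
sequence `(ν_n)`. -/
theorem stmt12 (A : ℕ → ℕ → ℂ)
    (hpsd : ∀ c : ℕ →₀ ℂ, ∃ r : ℝ, 0 ≤ r ∧
      (∑ n ∈ c.support, ∑ m ∈ c.support, (starRingEnd ℂ) (c n) * A n m * c m) = r)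
    (hnorm : ∀ n : ℕ, A n n = 1)
    (hcirc : ∀ n m : ℕ, ‖A n m‖ = 1) :
    ∃ ν : ℕ → ℝ, ∀ n m : ℕ, A n m = Complex.exp (Complex.I * ((ν n : ℂ) - (ν m : ℂ))) := by
  have hM : (Matrix.of A).PosSemidef := posSemidef_of_forall_finsupp_nonneg fun c ↦ by
    obtain ⟨r, hr, hc⟩ := hpsd c
    exact (Complex.zero_le_real.mpr hr).trans_eq hc.symm
  refine ⟨fun n ↦ arg (A n 0), fun n m ↦ ?_⟩
  have hfac := hM.apply_eq_mul_of_norm_eq_one (hnorm m) (hnorm 0) (hcirc m 0) n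
  have hherm := hM.isHermitian.apply 0 m
  simp only [of_apply] at hfac hherm
  calc A n m = A n 0 * star (A m 0) := by rw [hfac, hherm]
    _ = exp (arg (A n 0) * I) * (exp (arg (A m 0) * I))⁻¹ := by
        rw [exp_arg_mul_I_of_norm_eq_one (hcirc n 0), exp_arg_mul_I_of_norm_eq_one (hcirc m 0),
          RCLike.inv_eq_conj (hcirc m 0)]
        rfl
    _ = exp (I * (arg (A n 0) - arg (A m 0))) := by
        rw [← Complex.exp_neg, ← Complex.exp_add]
        ring_nf
end

section
/- If A : ℕ×ℕ → ℂ satisfies lim_{n→∞} (π/√3)^l (1 − (3/π²) Σ_{k≠n} |A(n,k)|^l/(k−n)²) = 0 for some l ≥ 1 with |A(n,m)| ≤ 1 for all n,m, then lim_{n→∞} (π/√3)^{l'} (1 − (3/π²) Σ_{k≠n} |A(n,k)|^{l'}/(k−n)²) = 0 for every l' ≥ 1. -/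
/-!
Write `a_k = ‖A(n,k)‖ ∈ [0,1]` and `w_k = 1/(k-n)²`. Since `∑_{k ≠ n} w_k ≤ ∑_{j ∈ ℤ, j ≠ 0} 1/j² = π²/3`,
the noise number of order `m` is `(π/√3)^m (3/π²) (π²/3 - ∑ a_k^m w_k)`, a nonnegative quantity.
Bernoulli's inequality together with `a^l ≤ a` gives `1 - a^{l'} ≤ l' (1 - a^l)` termwise, hence
`π²/3 - ∑ a_k^{l'} w_k ≤ l' (π²/3 - ∑ a_k^l w_k)`: the noise number of order `l'` is bounded by a
constant multiple of the one of order `l`.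
-/

open Real Filter Topology

theorem one_sub_pow_le_mul_one_sub_pow {a : ℝ} (ha₀ : 0 ≤ a) (ha₁ : a ≤ 1) {l : ℕ} (hl : 1 ≤ l)
    (l' : ℕ) : 1 - a ^ l' ≤ l' * (1 - a ^ l) := by
  have bernoulli : 1 + l' * (a - 1) ≤ a ^ l' := by
    simpa using one_add_mul_le_pow (a := a - 1) (by linarith) l'
  have hal : a ^ l ≤ a := pow_le_of_le_one ha₀ ha₁ (by omega)
  nlinarith [l'.cast_nonneg (α := ℝ)]

section WeightedPowerSums

variable {ι : Type*} {w a : ι → ℝ} (hw : Summable w) (hw₀ : ∀ i, 0 ≤ w i) (ha₀ : ∀ i, 0 ≤ a i)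
  (ha₁ : ∀ i, a i ≤ 1)

include hw hw₀ ha₀ ha₁

theorem summable_pow_mul (m : ℕ) : Summable fun i => a i ^ m * w i :=
  hw.of_nonneg_of_le (fun i => mul_nonneg (pow_nonneg (ha₀ i) m) (hw₀ i))
    fun i => mul_le_of_le_one_left (hw₀ i) (pow_le_one₀ (ha₀ i) (ha₁ i))

theorem tsum_pow_mul_le_tsum (m : ℕ) : ∑' i, a i ^ m * w i ≤ ∑' i, w i :=
  (summable_pow_mul hw hw₀ ha₀ ha₁ m).tsum_le_tsum
    (fun i => mul_le_of_le_one_left (hw₀ i) (pow_le_one₀ (ha₀ i) (ha₁ i))) hw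

theorem sub_tsum_pow_mul_le {M : ℝ} (hM : ∑' i, w i ≤ M) {l l' : ℕ} (hl : 1 ≤ l) (hl' : 1 ≤ l') :
    M - ∑' i, a i ^ l' * w i ≤ l' * (M - ∑' i, a i ^ l * w i) := by
  have tsum_one_sub_pow_mul (m : ℕ) :
      ∑' i, (1 - a i ^ m) * w i = ∑' i, w i - ∑' i, a i ^ m * w i := by
    simp_rw [sub_mul, one_mul]
    exact hw.tsum_sub (summable_pow_mul hw hw₀ ha₀ ha₁ m)
  have summable_one_sub_pow_mul (m : ℕ) : Summable fun i => (1 - a i ^ m) * w i := by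
    simp_rw [sub_mul, one_mul]
    exact hw.sub (summable_pow_mul hw hw₀ ha₀ ha₁ m)
  have termwise : ∑' i, (1 - a i ^ l') * w i ≤ l' * ∑' i, (1 - a i ^ l) * w i := by
    rw [← tsum_mul_left]
    refine (summable_one_sub_pow_mul l').tsum_le_tsum (fun i => ?_)
      ((summable_one_sub_pow_mul l).mul_left _)
    rw [← mul_assoc]
    exact mul_le_mul_of_nonneg_right (one_sub_pow_le_mul_one_sub_pow (ha₀ i) (ha₁ i) hl l') (hw₀ i)
  rw [tsum_one_sub_pow_mul, tsum_one_sub_pow_mul] at termwise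
  have gap : M - ∑' i, w i ≤ l' * (M - ∑' i, w i) :=
    le_mul_of_one_le_left (sub_nonneg.2 hM) (by exact_mod_cast hl')
  linarith

end WeightedPowerSums

/-- Division by zero makes the `j = 0` term vanish. -/
theorem hasSum_one_div_int_sq : HasSum (fun j : ℤ => 1 / (j : ℝ) ^ 2) (π ^ 2 / 3) := by
  have negative : HasSum (fun n : ℕ => 1 / ((n : ℝ) + 1) ^ 2) (π ^ 2 / 6) := by
    simpa using (hasSum_nat_add_iff' 1).mpr hasSum_zeta_two
  convert hasSum_zeta_two.of_nat_of_neg_add_one (f := fun j : ℤ => 1 / (j : ℝ) ^ 2)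
    (m' := π ^ 2 / 6) ?_ using 1
  · ring
  · convert negative using 2 with n
    push_cast
    ring

theorem injective_natCast_sub (n : ℕ) : Function.Injective fun k : ℕ => (k : ℤ) - n :=
  fun _ _ h => by simpa using h

theorem summable_one_div_natCast_sub_sq (n : ℕ) :
    Summable fun k : ℕ => 1 / ((k : ℝ) - n) ^ 2 := by
  simpa [Function.comp_def] using
    hasSum_one_div_int_sq.summable.comp_injective (injective_natCast_sub n)

theorem tsum_one_div_natCast_sub_sq_le (n : ℕ) :
    ∑' k : ℕ, 1 / ((k : ℝ) - n) ^ 2 ≤ π ^ 2 / 3 := by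
  have hle := tsum_comp_le_tsum_of_inj hasSum_one_div_int_sq.summable (fun j => by positivity)
    (injective_natCast_sub n)
  rw [hasSum_one_div_int_sq.tsum_eq] at hle
  simpa [Function.comp_def] using hle

noncomputable def noiseNumber (A : ℕ → ℕ → ℂ) (m n : ℕ) : ℝ :=
  (π / √3) ^ m *
    (1 - 3 / π ^ 2 * ∑' k : ℕ, (if k = n then (0:ℝ) else ‖A n k‖ ^ m / ((k : ℝ) - n) ^ 2))

section NoiseNumber

variable {A : ℕ → ℕ → ℂ}

theorem noiseNumber_eq (m n : ℕ) :
    noiseNumber A m n = (π / √3) ^ m * (3 / π ^ 2) *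
      (π ^ 2 / 3 - ∑' k : ℕ, ‖A n k‖ ^ m * (1 / ((k : ℝ) - n) ^ 2)) := by
  have summand (k : ℕ) : (if k = n then (0:ℝ) else ‖A n k‖ ^ m / ((k : ℝ) - n) ^ 2) =
      ‖A n k‖ ^ m * (1 / ((k : ℝ) - n) ^ 2) := by
    split_ifs with hk
    · simp [hk] -- `1 / 0 = 0`
    · exact div_eq_mul_one_div _ _
  simp_rw [noiseNumber, summand]
  field_simp [pi_ne_zero]

variable (hA : ∀ n m, ‖A n m‖ ≤ 1)
include hA

theorem noiseNumber_nonneg (m n : ℕ) : 0 ≤ noiseNumber A m n := by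
  rw [noiseNumber_eq]
  have hsum := (tsum_pow_mul_le_tsum (summable_one_div_natCast_sub_sq n) (fun k => by positivity)
    (fun k => norm_nonneg (A n k)) (hA n) m).trans (tsum_one_div_natCast_sub_sq_le n)
  exact mul_nonneg (by positivity) (by linarith)

theorem noiseNumber_le_mul {l l' : ℕ} (hl : 1 ≤ l) (hl' : 1 ≤ l') (n : ℕ) :
    noiseNumber A l' n ≤ l' * (π / √3) ^ l' / (π / √3) ^ l * noiseNumber A l n := by
  have key := sub_tsum_pow_mul_le (summable_one_div_natCast_sub_sq n) (fun k => by positivity)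
    (fun k => norm_nonneg (A n k)) (hA n) (tsum_one_div_natCast_sub_sq_le n) hl hl'
  rw [noiseNumber_eq, noiseNumber_eq]
  have : (π / √3) ^ l ≠ 0 := by positivity
  calc _ ≤ _ := mul_le_mul_of_nonneg_left key (by positivity)
    _ = _ := by field_simp

end NoiseNumber

/-- If for some `l ≥ 1` the noise numbers
`(π/√3)^l (1 - (3/π²) ∑_{k ≠ n} |A(n,k)|^l/(k-n)²)` tend to `0` as `n → ∞`, then the
same holds for every `l' ≥ 1`. -/
theorem stmt18 (A : ℕ → ℕ → ℂ) (hA : ∀ n m, ‖A n m‖ ≤ 1)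
    (l : ℕ) (hl : 1 ≤ l)
    (h : Tendsto
      (fun n : ℕ => (π / Real.sqrt 3) ^ l *
        (1 - 3 / π ^ 2 *
          ∑' k : ℕ, (if k = n then (0:ℝ) else ‖A n k‖ ^ l / ((k : ℝ) - n) ^ 2)))
      atTop (𝓝 0)) :
    ∀ l' : ℕ, 1 ≤ l' →
      Tendsto
        (fun n : ℕ => (π / Real.sqrt 3) ^ l' *
          (1 - 3 / π ^ 2 *
            ∑' k : ℕ, (if k = n then (0:ℝ) else ‖A n k‖ ^ l' / ((k : ℝ) - n) ^ 2)))
        atTop (𝓝 0) := by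
  intro l' hl'
  have h : Tendsto (noiseNumber A l) atTop (𝓝 0) := h
  exact squeeze_zero (noiseNumber_nonneg hA l') (noiseNumber_le_mul hA hl hl')
    (by simpa using h.const_mul (l' * (π / √3) ^ l' / (π / √3) ^ l))
end
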